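/- For arbitrary smooth functions u, v : ℝ³ → ℝ, define A = ∂₂∂₃∂₃ u − ∂₁∂₂∂₂ v − x₂·∂₁∂₂ u − 2∂₁ u and B = ∂₃⁴ u − ∂₁∂₂∂₃∂₃ v − 2x₂·∂₁∂₃∂₃ u + x₂·∂₁∂₁∂₂ v − ∂₁∂₁ v + x₂²·∂₁∂₁ u. Then the differential identity ∂₃∂₃ A − x₂ · ∂₁ A − ∂₂ B = 0 holds identically. -/

import Mathlib

/-- Partial derivative in the `i`-th coordinate direction on `ℝ³`. -/
noncomputable def pd (i : Fin 3) (f : (Fin 3 → ℝ) → ℝ) : (Fin 3 → ℝ) → ℝ :=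
  fun x => fderiv ℝ f x (Pi.single i 1)

lemma pd_contDiff {f : (Fin 3 → ℝ) → ℝ} (hf : ContDiff ℝ (⊤ : ℕ∞) f) (i : Fin 3) :
    ContDiff ℝ (⊤ : ℕ∞) (pd i f) :=
  (hf.fderiv_right ((by simp))).clm_apply contDiff_const

lemma pd_diff {f : (Fin 3 → ℝ) → ℝ} (hf : ContDiff ℝ (⊤ : ℕ∞) f) (i : Fin 3) :
    Differentiable ℝ (pd i f) :=
  (pd_contDiff hf i).differentiable (by simp)

lemma pd_eq_snd {f : (Fin 3 → ℝ) → ℝ} (hf : ContDiff ℝ (⊤ : ℕ∞) f) (i j : Fin 3) (x : Fin 3 → ℝ) :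
    pd i (pd j f) x = fderiv ℝ (fderiv ℝ f) x (Pi.single i 1) (Pi.single j 1) := by
  have hd : DifferentiableAt ℝ (fderiv ℝ f) x :=
    ((hf.fderiv_right (m := 1) ((by norm_cast))).differentiable one_ne_zero) x
  set L := ContinuousLinearMap.apply ℝ ℝ ((Pi.single j 1 : Fin 3 → ℝ)) with hL
  have h1 : HasFDerivAt (⇑L ∘ fderiv ℝ f) (L.comp (fderiv ℝ (fderiv ℝ f) x)) x :=
    L.hasFDerivAt.comp x hd.hasFDerivAt
  have h2 : pd j f = ⇑L ∘ fderiv ℝ f := rfl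
  show fderiv ℝ (pd j f) x (Pi.single i 1) = _
  rw [h2, h1.fderiv]
  rfl

lemma pd_comm {f : (Fin 3 → ℝ) → ℝ} (hf : ContDiff ℝ (⊤ : ℕ∞) f) (i j : Fin 3) :
    pd i (pd j f) = pd j (pd i f) := by
  funext x
  rw [pd_eq_snd hf, pd_eq_snd hf]
  exact (hf.contDiffAt.isSymmSndFDerivAt (by simp; norm_cast)) _ _

lemma pd_sub {f g : (Fin 3 → ℝ) → ℝ} (hf : Differentiable ℝ f) (hg : Differentiable ℝ g)
    (i : Fin 3) :
    pd i (fun y => f y - g y) = fun x => pd i f x - pd i g x := by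
  funext x
  simp only [pd]
  rw [fderiv_fun_sub (hf x) (hg x)]
  rfl

lemma pd_add {f g : (Fin 3 → ℝ) → ℝ} (hf : Differentiable ℝ f) (hg : Differentiable ℝ g)
    (i : Fin 3) :
    pd i (fun y => f y + g y) = fun x => pd i f x + pd i g x := by
  funext x
  simp only [pd]
  rw [fderiv_fun_add (hf x) (hg x)]
  rfl

lemma pd_const_mul {f : (Fin 3 → ℝ) → ℝ} (hf : Differentiable ℝ f) (c : ℝ) (i : Fin 3) :
    pd i (fun y => c * f y) = fun x => c * pd i f x := by
  funext x
  simp only [pd]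
  rw [fderiv_const_mul (hf x) c]
  rfl

lemma pd_coord_mul {f : (Fin 3 → ℝ) → ℝ} (hf : Differentiable ℝ f) (i : Fin 3) :
    pd i (fun y => y 1 * f y) =
      fun x => (Pi.single i 1 : Fin 3 → ℝ) 1 * f x + x 1 * pd i f x := by
  funext x
  simp only [pd]
  have hc : DifferentiableAt ℝ (fun y : Fin 3 → ℝ => y 1) x :=
    ((ContinuousLinearMap.proj (R := ℝ) (φ := fun _ : Fin 3 => ℝ) 1).differentiable) x
  rw [fderiv_fun_mul hc (hf x)]
  have hproj : fderiv ℝ (fun y : Fin 3 → ℝ => y 1) x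
      = ContinuousLinearMap.proj (R := ℝ) (φ := fun _ : Fin 3 => ℝ) 1 :=
    (ContinuousLinearMap.proj (R := ℝ) (φ := fun _ : Fin 3 => ℝ) 1).fderiv
  simp only [ContinuousLinearMap.add_apply, ContinuousLinearMap.smul_apply, hproj,
    ContinuousLinearMap.proj_apply, smul_eq_mul]
  ring

theorem stmt_10 (u v : (Fin 3 → ℝ) → ℝ)
    (hu : ContDiff ℝ (⊤ : ℕ∞) u) (hv : ContDiff ℝ (⊤ : ℕ∞) v)
    (A B : (Fin 3 → ℝ) → ℝ)
    (hA : A = fun x => pd 1 (pd 2 (pd 2 u)) x - pd 0 (pd 1 (pd 1 v)) x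
      - x 1 * pd 0 (pd 1 u) x - 2 * pd 0 u x)
    (hB : B = fun x => pd 2 (pd 2 (pd 2 (pd 2 u))) x - pd 0 (pd 1 (pd 2 (pd 2 v))) x
      - 2 * x 1 * pd 0 (pd 2 (pd 2 u)) x + x 1 * pd 0 (pd 0 (pd 1 v)) x
      - pd 0 (pd 0 v) x + (x 1) ^ 2 * pd 0 (pd 0 u) x) :
    ∀ x, pd 2 (pd 2 A) x - x 1 * pd 0 A x - pd 1 B x = 0 := by
  have C : ∀ {f : (Fin 3 → ℝ) → ℝ}, ContDiff ℝ (⊤ : ℕ∞) f → ∀ i, ContDiff ℝ (⊤ : ℕ∞) (pd i f) :=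
    fun hf i => pd_contDiff hf i
  -- smoothness of iterated derivatives
  have hB' : B = fun x => pd 2 (pd 2 (pd 2 (pd 2 u))) x - pd 0 (pd 1 (pd 2 (pd 2 v))) x
      - 2 * (x 1 * pd 0 (pd 2 (pd 2 u)) x) + x 1 * pd 0 (pd 0 (pd 1 v)) x
      - pd 0 (pd 0 v) x + x 1 * (x 1 * pd 0 (pd 0 u) x) := by
    rw [hB]; funext x; ring
  -- differentiability facts for fun_prop
  have d1 : Differentiable ℝ (pd 0 u) := pd_diff hu 0
  have d2 : Differentiable ℝ (pd 2 (pd 0 u)) := pd_diff (C hu 0) 2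
  have d3 : Differentiable ℝ (pd 0 (pd 1 u)) := pd_diff (C hu 1) 0
  have d4 : Differentiable ℝ (pd 2 (pd 0 (pd 1 u))) := pd_diff (C (C hu 1) 0) 2
  have d5 : Differentiable ℝ (pd 1 (pd 2 (pd 2 u))) := pd_diff (C (C hu 2) 2) 1
  have d6 : Differentiable ℝ (pd 2 (pd 1 (pd 2 (pd 2 u)))) := pd_diff (C (C (C hu 2) 2) 1) 2
  have d7 : Differentiable ℝ (pd 2 (pd 2 (pd 2 (pd 2 u)))) := pd_diff (C (C (C hu 2) 2) 2) 2
  have d8 : Differentiable ℝ (pd 0 (pd 2 (pd 2 u))) := pd_diff (C (C hu 2) 2) 0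
  have d9 : Differentiable ℝ (pd 0 (pd 0 u)) := pd_diff (C hu 0) 0
  have d10 : Differentiable ℝ (pd 0 (pd 1 (pd 1 v))) := pd_diff (C (C hv 1) 1) 0
  have d11 : Differentiable ℝ (pd 2 (pd 0 (pd 1 (pd 1 v)))) := pd_diff (C (C (C hv 1) 1) 0) 2
  have d12 : Differentiable ℝ (pd 0 (pd 1 (pd 2 (pd 2 v)))) := pd_diff (C (C (C hv 2) 2) 1) 0
  have d13 : Differentiable ℝ (pd 0 (pd 0 (pd 1 v))) := pd_diff (C (C hv 1) 0) 0
  have d14 : Differentiable ℝ (pd 0 (pd 0 v)) := pd_diff (C hv 0) 0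
  -- commuting derivatives to normal form
  have E1 : pd 2 (pd 2 (pd 1 (pd 2 (pd 2 u)))) = pd 1 (pd 2 (pd 2 (pd 2 (pd 2 u)))) := by
    rw [pd_comm (C (C hu 2) 2) 2 1, pd_comm (C (C (C hu 2) 2) 2) 2 1]
  have E2 : pd 2 (pd 2 (pd 0 (pd 1 (pd 1 v)))) = pd 0 (pd 1 (pd 1 (pd 2 (pd 2 v)))) := by
    rw [pd_comm (C (C hv 1) 1) 2 0, pd_comm (C (C (C hv 1) 1) 2) 2 0,
      pd_comm (C hv 1) 2 1, pd_comm (C (C hv 1) 2) 2 1,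
      pd_comm hv 2 1, pd_comm (C hv 2) 2 1]
  have E2b : pd 1 (pd 0 (pd 1 (pd 2 (pd 2 v)))) = pd 0 (pd 1 (pd 1 (pd 2 (pd 2 v)))) := by
    rw [pd_comm (C (C (C hv 2) 2) 1) 1 0]
  have E3 : pd 2 (pd 2 (pd 0 (pd 1 u))) = pd 0 (pd 1 (pd 2 (pd 2 u))) := by
    rw [pd_comm (C hu 1) 2 0, pd_comm (C (C hu 1) 2) 2 0,
      pd_comm hu 2 1, pd_comm (C hu 2) 2 1]
  have E3b : pd 1 (pd 0 (pd 2 (pd 2 u))) = pd 0 (pd 1 (pd 2 (pd 2 u))) := by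
    rw [pd_comm (C (C hu 2) 2) 1 0]
  have E4 : pd 2 (pd 2 (pd 0 u)) = pd 0 (pd 2 (pd 2 u)) := by
    rw [pd_comm hu 2 0, pd_comm (C hu 2) 2 0]
  have E5 : pd 1 (pd 0 (pd 0 (pd 1 v))) = pd 0 (pd 0 (pd 1 (pd 1 v))) := by
    rw [pd_comm (C (C hv 1) 0) 1 0, pd_comm (C hv 1) 1 0]
  have E6 : pd 1 (pd 0 (pd 0 v)) = pd 0 (pd 0 (pd 1 v)) := by
    rw [pd_comm (C hv 0) 1 0, pd_comm hv 1 0]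
  have E7 : pd 1 (pd 0 (pd 0 u)) = pd 0 (pd 0 (pd 1 u)) := by
    rw [pd_comm (C hu 0) 1 0, pd_comm hu 1 0]
  have s0 : (Pi.single (0 : Fin 3) 1 : Fin 3 → ℝ) 1 = 0 := Pi.single_eq_of_ne (by decide) 1
  have s1 : (Pi.single (1 : Fin 3) 1 : Fin 3 → ℝ) 1 = 1 := Pi.single_eq_same 1 1
  have s2 : (Pi.single (2 : Fin 3) 1 : Fin 3 → ℝ) 1 = 0 := Pi.single_eq_of_ne (by decide) 1
  rw [hA, hB']
  simp (disch := fun_prop) only [pd_sub, pd_add, pd_const_mul, pd_coord_mul]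
  intro x
  rw [E1, E2, E2b, E3, E3b, E4, E5, E6, E7]
  simp only [s0, s1, s2]
  ring
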